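/- If C[s] =_LC t where C is a context and the term s has a free function symbol as its top symbol, then there exist a context C' and a term s' such that C' =_LC C, s' =_LC s, and C'[s'] = t (syntactically). -/
import Mathlib


namespace LCCtx

/-- The four sorts: bindings, environments, expressions and bound variables. -/
inductive TSort : Type where
  | Bind | Env | Exp | BV
deriving DecidableEq

/-- Many-sorted terms over the signature `emptyEnv : Env`, `env : Bind × Env → Env`
(theory symbols), free symbols `bind : BV × Exp → Bind`, `var : BV → Exp`,
`lam : BV × Exp → Exp`, `app : Exp × Exp → Exp`, `lett : Env × Exp → Exp`, sorted
variables, and additionally the hole constant `[·]` of sort `Exp`.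
A *context* is such a term with exactly one occurrence of the hole; a *term* (in the
ordinary sense) is one without holes. No function symbol has result sort `BV`. -/
inductive Tm : TSort → Type where
  | fvar : (σ : TSort) → ℕ → Tm σ
  | hole : Tm .Exp
  | emptyEnv : Tm .Env
  | env : Tm .Bind → Tm .Env → Tm .Env
  | bind : Tm .BV → Tm .Exp → Tm .Bind
  | var : Tm .BV → Tm .Exp
  | lam : Tm .BV → Tm .Exp → Tm .Exp
  | app : Tm .Exp → Tm .Exp → Tm .Exp
  | lett : Tm .Env → Tm .Exp → Tm .Exp

/-- Number of occurrences of the hole. -/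
def holes : {σ : TSort} → Tm σ → ℕ
  | _, .fvar _ _ => 0
  | _, .hole => 1
  | _, .emptyEnv => 0
  | _, .env b e => holes b + holes e
  | _, .bind x s => holes x + holes s
  | _, .var x => holes x
  | _, .lam x s => holes x + holes s
  | _, .app s t => holes s + holes t
  | _, .lett e s => holes e + holes s

/-- A context: exactly one occurrence of the hole. -/
def IsCtx {σ : TSort} (C : Tm σ) : Prop := holes C = 1

/-- A hole-free term. -/
def IsTm {σ : TSort} (t : Tm σ) : Prop := holes t = 0

/-- `fill C s` = `C[s]`: replace the hole(s) of `C` by `s`. -/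
def fill : {σ : TSort} → Tm σ → Tm .Exp → Tm σ
  | _, .fvar σ n, _ => .fvar σ n
  | _, .hole, u => u
  | _, .emptyEnv, _ => .emptyEnv
  | _, .env b e, u => .env (fill b u) (fill e u)
  | _, .bind x s, u => .bind (fill x u) (fill s u)
  | _, .var x, u => .var (fill x u)
  | _, .lam x s, u => .lam (fill x u) (fill s u)
  | _, .app s t, u => .app (fill s u) (fill t u)
  | _, .lett e s, u => .lett (fill e u) (fill s u)

/-- The equational theory LC (left-commutativity): the congruence generated by
`env(x, env(y, z)) = env(y, env(x, z))`, the hole being treated as a constant. -/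
inductive LC : {σ : TSort} → Tm σ → Tm σ → Prop
  | ax {x y : Tm .Bind} {z : Tm .Env} :
      LC (.env x (.env y z)) (.env y (.env x z))
  | refl {σ : TSort} (t : Tm σ) : LC t t
  | symm {σ : TSort} {s t : Tm σ} : LC s t → LC t s
  | trans {σ : TSort} {s t u : Tm σ} : LC s t → LC t u → LC s u
  | envC {b b' : Tm .Bind} {e e' : Tm .Env} :
      LC b b' → LC e e' → LC (.env b e) (.env b' e')
  | bindC {x x' : Tm .BV} {s s' : Tm .Exp} :
      LC x x' → LC s s' → LC (.bind x s) (.bind x' s')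
  | varC {x x' : Tm .BV} : LC x x' → LC (.var x) (.var x')
  | lamC {x x' : Tm .BV} {s s' : Tm .Exp} :
      LC x x' → LC s s' → LC (.lam x s) (.lam x' s')
  | appC {s s' t t' : Tm .Exp} :
      LC s s' → LC t t' → LC (.app s t) (.app s' t')
  | lettC {e e' : Tm .Env} {s s' : Tm .Exp} :
      LC e e' → LC s s' → LC (.lett e s) (.lett e' s')

/-- The set of (sorted) first-order variables occurring in a term. -/
def varsOf : {σ : TSort} → Tm σ → Finset (TSort × ℕ)
  | _, .fvar σ n => {(σ, n)}
  | _, .hole => ∅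
  | _, .emptyEnv => ∅
  | _, .env b e => varsOf b ∪ varsOf e
  | _, .bind x s => varsOf x ∪ varsOf s
  | _, .var x => varsOf x
  | _, .lam x s => varsOf x ∪ varsOf s
  | _, .app s t => varsOf s ∪ varsOf t
  | _, .lett e s => varsOf e ∪ varsOf s

/-- Almost ground: every occurring variable has a sort for which no function symbol has
that result sort; in this signature this is exactly the (empty) sort `BV`. -/
def AlmostGround {σ : TSort} (t : Tm σ) : Prop :=
  ∀ p ∈ varsOf t, p.1 = TSort.BV

/-- Context class `A` (application contexts): built only from the hole and applications
`app(·, s)` in the first argument, with `s` a hole-free term. -/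
inductive ClassA : {σ : TSort} → Tm σ → Prop
  | hole : ClassA .hole
  | app {C : Tm .Exp} {s : Tm .Exp} : ClassA C → holes s = 0 → ClassA (.app C s)

/-- The number of hole occurrences below a `lam`-symbol. -/
def holesUnderLam : {σ : TSort} → Tm σ → ℕ
  | _, .fvar _ _ => 0
  | _, .hole => 0
  | _, .emptyEnv => 0
  | _, .env b e => holesUnderLam b + holesUnderLam e
  | _, .bind x s => holesUnderLam x + holesUnderLam s
  | _, .var x => holesUnderLam x
  | _, .lam x s => holes x + holes s
  | _, .app s t => holesUnderLam s + holesUnderLam t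
  | _, .lett e s => holesUnderLam e + holesUnderLam s

/-- Context class `S` (surface contexts): a context whose hole does not occur below a
`lam`-symbol. -/
def ClassS {σ : TSort} (C : Tm σ) : Prop := IsCtx C ∧ holesUnderLam C = 0

end LCCtx

namespace LCCtx

/-- `s` has a free function symbol (`bind`, `var`, `lam`, `app` or `lett`) as its top
symbol. -/
def FreeTop : {σ : TSort} → Tm σ → Prop
  | _, .bind _ _ => True
  | _, .var _ => True
  | _, .lam _ _ => True
  | _, .app _ _ => True
  | _, .lett _ _ => True
  | _, _ => False

lemma holes_bv (t : Tm .BV) : holes t = 0 := by cases t; rfl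

lemma lc_holes {σ : TSort} {a b : Tm σ} (h : LC a b) : holes a = holes b := by
  induction h <;> simp_all [holes] <;> omega

lemma fill_holes_zero {σ : TSort} (C : Tm σ) (s : Tm .Exp) (h : holes C = 0) :
    fill C s = C := by
  induction C with
  | fvar => rfl
  | hole => simp [holes] at h
  | emptyEnv => rfl
  | env b e ihb ihe =>
    simp only [holes, Nat.add_eq_zero] at h; simp [fill, ihb h.1, ihe h.2]
  | bind x t ihx iht =>
    simp only [holes, Nat.add_eq_zero] at h; simp [fill, ihx h.1, iht h.2]
  | var x ihx => simp only [holes] at h; simp [fill, ihx h]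
  | lam x t ihx iht =>
    simp only [holes, Nat.add_eq_zero] at h; simp [fill, ihx h.1, iht h.2]
  | app u v ihu ihv =>
    simp only [holes, Nat.add_eq_zero] at h; simp [fill, ihu h.1, ihv h.2]
  | lett e t ihe iht =>
    simp only [holes, Nat.add_eq_zero] at h; simp [fill, ihe h.1, iht h.2]

/-- The key property: `a = C[s]` can be decomposed along any LC-equal term `b`. -/
def Good {σ : TSort} (a b : Tm σ) : Prop :=
  ∀ (C : Tm σ) (s : Tm .Exp), holes C = 1 → holes s = 0 → a = fill C s →
    ∃ (C' : Tm σ) (s' : Tm .Exp), LC C' C ∧ LC s' s ∧ fill C' s' = b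

lemma Good.rfl {σ : TSort} (t : Tm σ) : Good t t := by
  intro C s _ _ heq
  exact ⟨C, s, LC.refl C, LC.refl s, heq.symm⟩

lemma Good.transH {σ : TSort} {a b c : Tm σ} (g1 : Good a b) (g2 : Good b c) :
    Good a c := by
  intro C s hC hs heq
  obtain ⟨C1, s1, hC1, hs1, hf⟩ := g1 C s hC hs heq
  obtain ⟨C2, s2, hC2, hs2, hf2⟩ :=
    g2 C1 s1 (by rw [lc_holes hC1]; exact hC) (by rw [lc_holes hs1]; exact hs) hf.symm
  exact ⟨C2, s2, hC2.trans hC1, hs2.trans hs1, hf2⟩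

lemma Good.axH {x y : Tm .Bind} {z : Tm .Env} :
    Good (.env x (.env y z)) (.env y (.env x z)) := by
  intro C s _ _ heq
  cases C with
  | fvar _ n => simp [fill] at heq
  | emptyEnv => simp [fill] at heq
  | env Cb Ce =>
    simp only [fill, Tm.env.injEq] at heq
    obtain ⟨h1, h2⟩ := heq
    cases Ce with
    | fvar _ n => simp [fill] at h2
    | emptyEnv => simp [fill] at h2
    | env Cb2 Ce2 =>
      simp only [fill, Tm.env.injEq] at h2
      obtain ⟨h2a, h2b⟩ := h2
      refine ⟨.env Cb2 (.env Cb Ce2), s, LC.ax, LC.refl s, ?_⟩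
      simp [fill, ← h1, ← h2a, ← h2b]

lemma Good.envH {b1 b1' : Tm .Bind} {e1 e1' : Tm .Env}
    (hb : LC b1 b1') (he : LC e1 e1') (ihb : Good b1 b1') (ihe : Good e1 e1') :
    Good (.env b1 e1) (.env b1' e1') := by
  intro C s hC hs heq
  cases C with
  | fvar _ n => simp [fill] at heq
  | emptyEnv => simp [fill] at heq
  | env Cb Ce =>
    simp only [fill, Tm.env.injEq] at heq
    obtain ⟨h1, h2⟩ := heq
    simp only [holes] at hC
    rcases (by omega : holes Cb = 0 ∧ holes Ce = 1 ∨ holes Cb = 1 ∧ holes Ce = 0) with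
      ⟨hb0, he1⟩ | ⟨hb1, he0⟩
    · obtain ⟨Ce', s', hC', hs', hf⟩ := ihe Ce s he1 hs h2
      rw [fill_holes_zero Cb s hb0] at h1
      have hbz : holes b1' = 0 := by rw [← lc_holes hb, h1]; exact hb0
      refine ⟨.env b1' Ce', s', LC.envC (h1 ▸ hb.symm) hC', hs', ?_⟩
      simp [fill, fill_holes_zero b1' s' hbz, hf]
    · obtain ⟨Cb', s', hC', hs', hf⟩ := ihb Cb s hb1 hs h1
      rw [fill_holes_zero Ce s he0] at h2
      have hez : holes e1' = 0 := by rw [← lc_holes he, h2]; exact he0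
      refine ⟨.env Cb' e1', s', LC.envC hC' (h2 ▸ he.symm), hs', ?_⟩
      simp [fill, fill_holes_zero e1' s' hez, hf]

lemma Good.bindH {x x' : Tm .BV} {s1 s1' : Tm .Exp}
    (hx : LC x x') (hs1 : LC s1 s1') (ih : Good s1 s1') :
    Good (.bind x s1) (.bind x' s1') := by
  intro C s hC hs heq
  cases C with
  | fvar _ n => simp [fill] at heq
  | bind Cx Cs =>
    simp only [fill, Tm.bind.injEq] at heq
    obtain ⟨h1, h2⟩ := heq
    simp only [holes, holes_bv Cx, Nat.zero_add] at hC
    obtain ⟨Cs', s', hC', hs', hf⟩ := ih Cs s hC hs h2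
    rw [fill_holes_zero Cx s (holes_bv Cx)] at h1
    refine ⟨.bind x' Cs', s', LC.bindC (h1 ▸ hx.symm) hC', hs', ?_⟩
    simp [fill, fill_holes_zero x' s' (holes_bv x'), hf]

lemma Good.varH {x x' : Tm .BV} (hx : LC x x') : Good (.var x) (.var x') := by
  intro C s hC hs heq
  cases C with
  | fvar _ n => simp [fill] at heq
  | hole =>
    simp only [fill] at heq
    exact ⟨.hole, .var x', LC.refl _, heq ▸ (LC.varC hx).symm, Eq.refl _⟩
  | var Cx => simp [holes, holes_bv Cx] at hC
  | lam Cx Cs => simp [fill] at heq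
  | app Cu Cv => simp [fill] at heq
  | lett Ce Cs => simp [fill] at heq

lemma Good.lamH {x x' : Tm .BV} {s1 s1' : Tm .Exp}
    (hx : LC x x') (hs1 : LC s1 s1') (ih : Good s1 s1') :
    Good (.lam x s1) (.lam x' s1') := by
  intro C s hC hs heq
  cases C with
  | fvar _ n => simp [fill] at heq
  | hole =>
    simp only [fill] at heq
    exact ⟨.hole, .lam x' s1', LC.refl _, heq ▸ (LC.lamC hx hs1).symm, Eq.refl _⟩
  | var Cx => simp [fill] at heq
  | app Cu Cv => simp [fill] at heq
  | lett Ce Cs => simp [fill] at heq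
  | lam Cx Cs =>
    simp only [fill, Tm.lam.injEq] at heq
    obtain ⟨h1, h2⟩ := heq
    simp only [holes, holes_bv Cx, Nat.zero_add] at hC
    obtain ⟨Cs', s', hC', hs', hf⟩ := ih Cs s hC hs h2
    rw [fill_holes_zero Cx s (holes_bv Cx)] at h1
    refine ⟨.lam x' Cs', s', LC.lamC (h1 ▸ hx.symm) hC', hs', ?_⟩
    simp [fill, fill_holes_zero x' s' (holes_bv x'), hf]

lemma Good.appH {u u' v v' : Tm .Exp}
    (hu : LC u u') (hv : LC v v') (ihu : Good u u') (ihv : Good v v') :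
    Good (.app u v) (.app u' v') := by
  intro C s hC hs heq
  cases C with
  | fvar _ n => simp [fill] at heq
  | hole =>
    simp only [fill] at heq
    exact ⟨.hole, .app u' v', LC.refl _, heq ▸ (LC.appC hu hv).symm, Eq.refl _⟩
  | var Cx => simp [fill] at heq
  | lam Cx Cs => simp [fill] at heq
  | lett Ce Cs => simp [fill] at heq
  | app Cu Cv =>
    simp only [fill, Tm.app.injEq] at heq
    obtain ⟨h1, h2⟩ := heq
    simp only [holes] at hC
    rcases (by omega : holes Cu = 0 ∧ holes Cv = 1 ∨ holes Cu = 1 ∧ holes Cv = 0) with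
      ⟨hu0, hv1⟩ | ⟨hu1, hv0⟩
    · obtain ⟨Cv', s', hC', hs', hf⟩ := ihv Cv s hv1 hs h2
      rw [fill_holes_zero Cu s hu0] at h1
      have huz : holes u' = 0 := by rw [← lc_holes hu, h1]; exact hu0
      refine ⟨.app u' Cv', s', LC.appC (h1 ▸ hu.symm) hC', hs', ?_⟩
      simp [fill, fill_holes_zero u' s' huz, hf]
    · obtain ⟨Cu', s', hC', hs', hf⟩ := ihu Cu s hu1 hs h1
      rw [fill_holes_zero Cv s hv0] at h2
      have hvz : holes v' = 0 := by rw [← lc_holes hv, h2]; exact hv0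
      refine ⟨.app Cu' v', s', LC.appC hC' (h2 ▸ hv.symm), hs', ?_⟩
      simp [fill, fill_holes_zero v' s' hvz, hf]

lemma Good.lettH {e1 e1' : Tm .Env} {s1 s1' : Tm .Exp}
    (he : LC e1 e1') (hs1 : LC s1 s1') (ihe : Good e1 e1') (ihs : Good s1 s1') :
    Good (.lett e1 s1) (.lett e1' s1') := by
  intro C s hC hs heq
  cases C with
  | fvar _ n => simp [fill] at heq
  | hole =>
    simp only [fill] at heq
    exact ⟨.hole, .lett e1' s1', LC.refl _, heq ▸ (LC.lettC he hs1).symm, Eq.refl _⟩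
  | var Cx => simp [fill] at heq
  | lam Cx Cs => simp [fill] at heq
  | app Cu Cv => simp [fill] at heq
  | lett Ce Cs =>
    simp only [fill, Tm.lett.injEq] at heq
    obtain ⟨h1, h2⟩ := heq
    simp only [holes] at hC
    rcases (by omega : holes Ce = 0 ∧ holes Cs = 1 ∨ holes Ce = 1 ∧ holes Cs = 0) with
      ⟨he0, hs1'⟩ | ⟨he1, hs0⟩
    · obtain ⟨Cs', s', hC', hs', hf⟩ := ihs Cs s hs1' hs h2
      rw [fill_holes_zero Ce s he0] at h1
      have hez : holes e1' = 0 := by rw [← lc_holes he, h1]; exact he0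
      refine ⟨.lett e1' Cs', s', LC.lettC (h1 ▸ he.symm) hC', hs', ?_⟩
      simp [fill, fill_holes_zero e1' s' hez, hf]
    · obtain ⟨Ce', s', hC', hs', hf⟩ := ihe Ce s he1 hs h1
      rw [fill_holes_zero Cs s hs0] at h2
      have hsz : holes s1' = 0 := by rw [← lc_holes hs1, h2]; exact hs0
      refine ⟨.lett Ce' s1', s', LC.lettC hC' (h2 ▸ hs1.symm), hs', ?_⟩
      simp [fill, fill_holes_zero s1' s' hsz, hf]

lemma good_both {σ : TSort} {a b : Tm σ} (h : LC a b) : Good a b ∧ Good b a := by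
  induction h with
  | ax => exact ⟨Good.axH, Good.axH⟩
  | refl t => exact ⟨Good.rfl t, Good.rfl t⟩
  | symm _ ih => exact ⟨ih.2, ih.1⟩
  | trans _ _ ih1 ih2 => exact ⟨ih1.1.transH ih2.1, ih2.2.transH ih1.2⟩
  | envC hb he ihb ihe =>
    exact ⟨Good.envH hb he ihb.1 ihe.1, Good.envH hb.symm he.symm ihb.2 ihe.2⟩
  | bindC hx hs ihx ihs =>
    exact ⟨Good.bindH hx hs ihs.1, Good.bindH hx.symm hs.symm ihs.2⟩
  | varC hx _ => exact ⟨Good.varH hx, Good.varH hx.symm⟩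
  | lamC hx hs ihx ihs =>
    exact ⟨Good.lamH hx hs ihs.1, Good.lamH hx.symm hs.symm ihs.2⟩
  | appC hu hv ihu ihv =>
    exact ⟨Good.appH hu hv ihu.1 ihv.1, Good.appH hu.symm hv.symm ihu.2 ihv.2⟩
  | lettC he hs ihe ihs =>
    exact ⟨Good.lettH he hs ihe.1 ihs.1, Good.lettH he.symm hs.symm ihe.2 ihs.2⟩

/-- If `C[s] =_LC t` where `C` is a context and the term `s` has a free
function symbol as its top symbol, then there exist a context `C'` and a term `s'` such
that `C' =_LC C`, `s' =_LC s`, and `C'[s'] = t` syntactically. -/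
theorem lc_decomposition_along_context {σ : TSort}
    (C : Tm σ) (s : Tm .Exp) (t : Tm σ)
    (hC : IsCtx C) (hs : IsTm s) (ht : IsTm t)
    (htop : FreeTop s) (h : LC (fill C s) t) :
    ∃ (C' : Tm σ) (s' : Tm .Exp),
      IsCtx C' ∧ IsTm s' ∧ LC C' C ∧ LC s' s ∧ fill C' s' = t := by
  obtain ⟨C', s', hC', hs', hf⟩ := (good_both h).1 C s hC hs rfl
  refine ⟨C', s', ?_, ?_, hC', hs', hf⟩
  · unfold IsCtx; rw [lc_holes hC']; exact hC
  · unfold IsTm; rw [lc_holes hs']; exact hs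

end LCCtx
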